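/- Let a ∈ C be invertible with a·ā = 1 (an element of the Pin group of (H, Q)), and let x, y ∈ H satisfy ι(y) = α(a)·ι(x)·a⁻¹ in C. Then for all u, v ∈ V one has ω_y(u, v) = ω_x(a⁻¹·u, α(a)⁻¹·v); that is, the map x ↦ ω_x is equivariant for the Pin-group actions on H and on alternating 2-forms on V. -/

import Mathlib

open CliffordAlgebra

theorem LinearMap.BilinForm.apply_involute_smul_left
    {R M V : Type*} [CommRing R] [AddCommGroup M] [Module R M] {Q : QuadraticForm R M}
    [AddCommGroup V] [Module R V] [Module (CliffordAlgebra Q) V]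
    {τ : LinearMap.BilinForm R V}
    (hτinv : ∀ (a : CliffordAlgebra Q) (u v : V), τ (a • u) v = τ u (involute (reverse a) • v))
    (a : CliffordAlgebra Q) (u v : V) :
    τ (involute a • u) v = τ u (reverse a • v) := by
  rw [hτinv, reverse_involute, involute_involute]

theorem CliffordAlgebra.reverse_eq_involute_of_mul_involute_reverse_eq_one
    {R M : Type*} [CommRing R] [AddCommGroup M] [Module R M] {Q : QuadraticForm R M}
    {a b : CliffordAlgebra Q} (hba : b * a = 1) (hconj : a * involute (reverse a) = 1) :
    reverse a = involute b := by
  rw [left_inv_eq_right_inv hba hconj, involute_involute]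

theorem omega_pin_equivariant
    {k : Type*} [Field k]
    {H : Type*} [AddCommGroup H] [Module k H]
    (Q : QuadraticForm k H)
    {V : Type*} [AddCommGroup V] [Module k V]
    [Module (CliffordAlgebra Q) V]
    (τ : LinearMap.BilinForm k V)
    (hτinv : ∀ (a : CliffordAlgebra Q) (u v : V),
      τ (a • u) v = τ u (involute (reverse a) • v))
    (a b : CliffordAlgebra Q) (hba : b * a = 1)
    (hPin : a * involute (reverse a) = 1)
    (x y : H) (hxy : ι Q y = involute a * ι Q x * b) :
    ∀ u v : V, τ (ι Q y • u) v = τ (ι Q x • (b • u)) ((involute b) • v) := by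
  intro u v
  rw [hxy, mul_assoc, mul_smul, τ.apply_involute_smul_left hτinv,
    reverse_eq_involute_of_mul_involute_reverse_eq_one hba hPin, mul_smul]
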